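/- arXiv:2005.05008 — 3 statements merged into one kernel-verified Lean document; each statement's English description precedes it below -/
import Mathlib

section
/- For any complex numbers a(n) with n an integer in (a, b], and any positive integer Q, |Σ_{a<n≤b} a(n)|² ≤ (1 + (b−a)/Q) · Σ_{|q| ≤ Q} (1 − |q|/Q) · Σ_{a < n, n+q ≤ b} conj(a(n+q))·a(n). -/
/-!
Extend `f` by zero outside `(a, b]`. Averaging over `Q` shifts gives
`Q · Σ f = Σ_m Σ_{0<r≤Q} f (m + r)`, where only the `b - a + Q - 1` values `a - Q < m ≤ b - 1`
contribute, so Cauchy–Schwarz over `m` bounds `Q² |Σ f|²` by `(b - a + Q - 1) Σ_m |Σ_r f (m + r)|²`.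
Expanding the square, the shift `q = r - s` arises from exactly `Q - |q|` pairs `(r, s)`, which
produces the Fejér weights `Q (1 - |q| / Q)`.
-/

open Finset ComplexConjugate

theorem card_Ioc_prod_filter_sub_eq (Q q : ℤ) :
    #{p ∈ Ioc 0 Q ×ˢ Ioc 0 Q | p.1 - p.2 = q} = (Q - |q|).toNat := by
  rw [show Q - |q| = min Q (Q - q) - max 0 (-q) by
    rcases abs_cases q with ⟨h, _⟩ | ⟨h, _⟩ <;> omega, ← Int.card_Ioc]
  refine card_nbij' Prod.snd (fun s => (s + q, s)) ?_ ?_ ?_ (fun _ _ => rfl)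
  · intro p hp
    simp only [coe_filter, mem_product, mem_Ioc, Set.mem_ofPred_eq] at hp
    simp only [coe_Ioc, Set.mem_Ioc, max_lt_iff, le_min_iff]; omega
  · intro r hr
    simp only [coe_Ioc, Set.mem_Ioc, max_lt_iff, le_min_iff] at hr
    simp only [coe_filter, mem_product, mem_Ioc, Set.mem_ofPred_eq]; omega
  · rintro ⟨r, s⟩ hp
    simp only [coe_filter, mem_product, mem_Ioc, Set.mem_ofPred_eq] at hp
    simp only [Prod.mk.injEq, and_true]; omega

theorem sum_sum_Ioc_comp_sub {M : Type*} [AddCommGroup M] (Q : ℤ) (F : ℤ → M) :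
    ∑ r ∈ Ioc 0 Q, ∑ s ∈ Ioc 0 Q, F (r - s) = ∑ q ∈ Icc (-Q) Q, (Q - |q|) • F q := by
  rw [← sum_product', ← sum_fiberwise_of_maps_to (g := fun p => p.1 - p.2) (t := Icc (-Q) Q)]
  · refine sum_congr rfl fun q hq => ?_
    rw [sum_congr rfl fun p hp => congrArg F (mem_filter.1 hp).2, sum_const,
      card_Ioc_prod_filter_sub_eq, ← natCast_zsmul,
      Int.toNat_of_nonneg (sub_nonneg.2 (abs_le.2 (mem_Icc.1 hq)))]
  · intro p hp
    simp only [mem_product, mem_Ioc] at hp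
    simp only [mem_Icc]; omega

theorem sum_Ioc_comp_add_of_support {M : Type*} [AddCommMonoid M] {g : ℤ → M} {a b : ℤ}
    (hg : ∀ n ∉ Ioc a b, g n = 0) {l u r : ℤ} (hl : l + r ≤ a) (hu : b ≤ u + r) :
    ∑ m ∈ Ioc l u, g (m + r) = ∑ n ∈ Ioc a b, g n := by
  have hshift : ∑ m ∈ Ioc l u, g (m + r) = ∑ n ∈ Ioc (l + r) (u + r), g n := by
    rw [← map_add_right_Ioc, sum_map]; rfl
  rw [hshift]
  refine (sum_subset (fun n hn => ?_) fun n _ hn => hg n hn).symm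
  simp only [mem_Ioc] at hn ⊢; omega

theorem norm_sum_sq_le_card_mul_sum_norm_sq {ι E : Type*} [SeminormedAddCommGroup E]
    (s : Finset ι) (c : ι → E) :
    ‖∑ i ∈ s, c i‖ ^ 2 ≤ #s * ∑ i ∈ s, ‖c i‖ ^ 2 :=
  (pow_le_pow_left₀ (norm_nonneg _) (norm_sum_le _ _) 2).trans sq_sum_le_card_mul_sum_sq

theorem sum_sum_shifts_of_support {M : Type*} [AddCommMonoid M] {g : ℤ → M} {a b : ℤ}
    (hg : ∀ n ∉ Ioc a b, g n = 0) (Q : ℕ) :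
    ∑ m ∈ Ioc (a - Q) (b - 1), ∑ r ∈ Ioc 0 (Q : ℤ), g (m + r) = Q • ∑ n ∈ Ioc a b, g n := by
  rw [sum_comm, sum_congr rfl fun r hr => sum_Ioc_comp_add_of_support hg (by rw [mem_Ioc] at hr; omega)
    (by rw [mem_Ioc] at hr; omega), sum_const, Int.card_Ioc, sub_zero, Int.toNat_natCast]

section

variable {g : ℤ → ℂ} {a b : ℤ}

theorem sum_norm_sq_sum_shifts_of_support (hg : ∀ n ∉ Ioc a b, g n = 0) (Q : ℕ) :
    ∑ m ∈ Ioc (a - Q) (b - 1), ‖∑ r ∈ Ioc 0 (Q : ℤ), g (m + r)‖ ^ 2 =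
      ∑ q ∈ Icc (-(Q : ℤ)) Q, ((Q : ℝ) - |(q : ℝ)|) *
        (∑ n ∈ Ioc a b, conj (g (n + q)) * g n).re := by
  have hcorr : ∀ r, ∀ s ∈ Ioc 0 (Q : ℤ), ∑ m ∈ Ioc (a - Q) (b - 1), conj (g (m + r)) * g (m + s) =
      ∑ n ∈ Ioc a b, conj (g (n + (r - s))) * g n := by
    intro r s hs
    rw [mem_Ioc] at hs
    rw [← sum_Ioc_comp_add_of_support (g := fun n => conj (g (n + (r - s))) * g n)
      (fun n hn => by simp [hg n hn]) (l := a - Q) (u := b - 1) (r := s) (by omega) (by omega)]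
    simp only [add_add_sub_cancel]
  calc ∑ m ∈ Ioc (a - Q) (b - 1), ‖∑ r ∈ Ioc 0 (Q : ℤ), g (m + r)‖ ^ 2
      = (∑ m ∈ Ioc (a - Q) (b - 1), ∑ r ∈ Ioc 0 (Q : ℤ), ∑ s ∈ Ioc 0 (Q : ℤ),
          conj (g (m + r)) * g (m + s)).re := by
        rw [Complex.re_sum]
        refine sum_congr rfl fun m _ => ?_
        rw [← sum_mul_sum, ← map_sum, Complex.conj_mul']
        norm_cast
    _ = (∑ r ∈ Ioc 0 (Q : ℤ), ∑ s ∈ Ioc 0 (Q : ℤ),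
          ∑ n ∈ Ioc a b, conj (g (n + (r - s))) * g n).re := by
        rw [sum_comm]
        exact congrArg _ (sum_congr rfl fun r _ => by rw [sum_comm]; exact sum_congr rfl (hcorr r))
    _ = _ := by
        rw [sum_sum_Ioc_comp_sub _ fun q => ∑ n ∈ Ioc a b, conj (g (n + q)) * g n, Complex.re_sum]
        refine sum_congr rfl fun q _ => ?_
        rw [Complex.smul_re, zsmul_eq_mul]
        push_cast
        rfl

theorem sq_mul_norm_sum_sq_le_of_support (hg : ∀ n ∉ Ioc a b, g n = 0) (Q : ℕ) (hab : a < b) :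
    (Q : ℝ) ^ 2 * ‖∑ n ∈ Ioc a b, g n‖ ^ 2 ≤
      ((b : ℝ) - a + Q - 1) * ∑ q ∈ Icc (-(Q : ℤ)) Q, ((Q : ℝ) - |(q : ℝ)|) *
        (∑ n ∈ Ioc a b, conj (g (n + q)) * g n).re := by
  have hcard : (#(Ioc (a - Q) (b - 1)) : ℝ) = (b : ℝ) - a + Q - 1 := by
    have hlen : ((b - 1 - (a - Q)).toNat : ℤ) = b - 1 - (a - Q) := Int.toNat_of_nonneg (by omega)
    rw [Int.card_Ioc, ← Int.cast_natCast, hlen]; push_cast; ring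
  calc (Q : ℝ) ^ 2 * ‖∑ n ∈ Ioc a b, g n‖ ^ 2
      = ‖∑ m ∈ Ioc (a - Q) (b - 1), ∑ r ∈ Ioc 0 (Q : ℤ), g (m + r)‖ ^ 2 := by
        rw [sum_sum_shifts_of_support hg, nsmul_eq_mul, norm_mul, Complex.norm_natCast, mul_pow]
    _ ≤ _ := norm_sum_sq_le_card_mul_sum_norm_sq _ _
    _ = _ := by rw [hcard, sum_norm_sq_sum_shifts_of_support hg]

theorem norm_sum_sq_le_of_support (hg : ∀ n ∉ Ioc a b, g n = 0) {Q : ℕ} (hQ : 0 < Q) :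
    ‖∑ n ∈ Ioc a b, g n‖ ^ 2 ≤
      (1 + ((b : ℝ) - a) / Q) * ∑ q ∈ Icc (-(Q : ℤ)) Q, (1 - |(q : ℝ)| / Q) *
        (∑ n ∈ Ioc a b, conj (g (n + q)) * g n).re := by
  rcases le_or_gt b a with hba | hab
  · simp [Ioc_eq_empty_of_le hba]
  set B := ∑ q ∈ Icc (-(Q : ℤ)) Q, (1 - |(q : ℝ)| / Q) *
    (∑ n ∈ Ioc a b, conj (g (n + q)) * g n).re
  have hQ' : (0 : ℝ) < Q := by exact_mod_cast hQ
  have hQB : ∑ q ∈ Icc (-(Q : ℤ)) Q, ((Q : ℝ) - |(q : ℝ)|) *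
      (∑ n ∈ Ioc a b, conj (g (n + q)) * g n).re = Q * B := by
    rw [mul_sum]
    refine sum_congr rfl fun q _ => ?_
    field_simp
  have hB : 0 ≤ B := by
    refine nonneg_of_mul_nonneg_right ?_ hQ'
    rw [← hQB, ← sum_norm_sq_sum_shifts_of_support hg]
    positivity
  have key := sq_mul_norm_sum_sq_le_of_support hg Q hab
  rw [hQB] at key
  refine le_of_mul_le_mul_left ?_ (pow_pos hQ' 2)
  calc (Q : ℝ) ^ 2 * ‖∑ n ∈ Ioc a b, g n‖ ^ 2 ≤ ((b : ℝ) - a + Q - 1) * (Q * B) := key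
    _ ≤ ((b : ℝ) - a + Q) * (Q * B) := by gcongr; linarith
    _ = Q ^ 2 * ((1 + ((b : ℝ) - a) / Q) * B) := by field_simp; ring

end

theorem sum_Ioc_max_min_conj_mul_eq_indicator (f : ℤ → ℂ) (a b q : ℤ) :
    ∑ n ∈ Ioc (max a (a - q)) (min b (b - q)), conj (f (n + q)) * f n =
      ∑ n ∈ Ioc a b, conj ((Ioc a b : Set ℤ).indicator f (n + q)) *
        (Ioc a b : Set ℤ).indicator f n := by
  have hmem : ∀ n, n ∈ Ioc (max a (a - q)) (min b (b - q)) ↔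
      n ∈ (Ioc a b : Set ℤ) ∧ n + q ∈ (Ioc a b : Set ℤ) := by
    intro n; simp only [coe_Ioc, Set.mem_Ioc, mem_Ioc, max_lt_iff, le_min_iff]; omega
  have hsub : Ioc (max a (a - q)) (min b (b - q)) ⊆ Ioc a b := fun n hn => ((hmem n).1 hn).1
  rw [← sum_subset hsub fun n hn hn' => ?_]
  · refine sum_congr rfl fun n hn => ?_
    rw [Set.indicator_of_mem ((hmem n).1 hn).1, Set.indicator_of_mem ((hmem n).1 hn).2]
  · have : n + q ∉ (Ioc a b : Set ℤ) := fun h => hn' ((hmem n).2 ⟨mem_coe.2 hn, h⟩)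
    rw [Set.indicator_of_notMem this, map_zero, zero_mul]

/-- Weyl–van der Corput shift inequality (Iwaniec–Kowalski, Lemma 8.17):
for any complex numbers `f(n)` with `n` an integer in `(a, b]` and any positive
integer `Q`,
`|Σ_{a<n≤b} f(n)|² ≤ (1+(b-a)/Q) Σ_{|q|≤Q} (1-|q|/Q) Σ_{a<n, n+q≤b} conj(f(n+q)) f(n)`,
where the inner sum is over `n` with both `n` and `n+q` in `(a,b]`. -/
theorem statement3 (a b : ℤ) (f : ℤ → ℂ) (Q : ℕ) (hQ : 0 < Q) :
    ‖∑ n ∈ Finset.Ioc a b, f n‖ ^ 2 ≤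
      (1 + ((b : ℝ) - a) / Q) *
        (∑ q ∈ Finset.Icc (-(Q : ℤ)) (Q : ℤ), (1 - |(q : ℝ)| / Q) *
          (∑ n ∈ Finset.Ioc (max a (a - q)) (min b (b - q)),
            (starRingEnd ℂ) (f (n + q)) * f n).re) := by
  have hsum : ∑ n ∈ Ioc a b, f n = ∑ n ∈ Ioc a b, (Ioc a b : Set ℤ).indicator f n :=
    sum_congr rfl fun n hn => (Set.indicator_of_mem (mem_coe.2 hn) f).symm
  simp_rw [sum_Ioc_max_min_conj_mul_eq_indicator, hsum]
  exact norm_sum_sq_le_of_support (fun n hn => Set.indicator_of_notMem (by simpa using hn) f) hQ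
end

section
/- For any real M ≥ 2 and any real t, ψ(t) = −Σ_{1 ≤ |m| ≤ M} e(mt)/(2πim) + O(min(1, 1/(M·‖t‖))), where the implied constant is absolute. -/
open Real Finset

/-- Distance from `x` to the nearest integer. -/
noncomputable def nint (x : ℝ) : ℝ := |x - round x|

/-- `e(t) = exp(2πit)`. -/
noncomputable def e (t : ℝ) : ℂ := Complex.exp (2 * Real.pi * Complex.I * t)

/-- `ψ(t) = {t} - 1/2`. -/
noncomputable def psi (t : ℝ) : ℝ := Int.fract t - 1/2

/-!
Pairing `m` with `-m`, the truncated series is `ψ(t) + Σ_{m ≤ N} sin(2πmt)/(πm) = -F_N(x)/π`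
with `x = 2π{t}` and `F_N(x) = (π - x)/2 - Σ_{m ≤ N} sin(mx)/m`. Since `F_N(π) = 0` and
`F_N'(u) = -sin((N + 1/2)u)/(2 sin(u/2))` is minus the Dirichlet kernel,
`F_N(x) = ∫_x^π sin((N + 1/2)u) w(u) du` with the decreasing weight
`w(u) = 1/(2 sin(u/2)) ≤ π/(2u)`. Integrating by parts against `w` gives
`|F_N(x)| ≤ 2 w(x)/(N + 1/2) ≤ π/((N + 1/2)x)`; bounding the integrand by `π(N + 1/2)/2` on
`[x, 1/(N + 1/2)]` and using the previous bound beyond gives `|F_N(x)| ≤ 3π/2`. As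
`F_N(2π - x) = -F_N(x)`, one may take `x = 2π‖t‖ ∈ (0, π]`.
-/

theorem abs_integral_mul_sin_le_of_deriv_nonpos {g g' : ℝ → ℝ} {a b l : ℝ} (hab : a ≤ b)
    (hl : 0 < l) (hg : ∀ u ∈ Set.Icc a b, HasDerivAt g (g' u) u)
    (hg'int : IntervalIntegrable g' MeasureTheory.volume a b)
    (hg' : ∀ u ∈ Set.Icc a b, g' u ≤ 0) (hgb : 0 ≤ g b) :
    |∫ u in a..b, g u * sin (l * u)| ≤ 2 * g a / l := by
  set H : ℝ → ℝ := fun u ↦ -cos (l * u) / l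
  have hH : ∀ u, HasDerivAt H (sin (l * u)) u := fun u ↦ by
    refine (((hasDerivAt_id' u).const_mul l).cos.neg.div_const l).congr_deriv ?_
    field_simp
  have hHle : ∀ u, |H u| ≤ 1 / l := fun u ↦ by
    rw [abs_div, abs_neg, abs_of_pos hl]
    gcongr
    exact abs_cos_le_one _
  rw [← Set.uIcc_of_le hab] at hg
  have hibp := intervalIntegral.integral_mul_deriv_eq_deriv_mul hg (fun u _ ↦ hH u) hg'int
    (by apply Continuous.intervalIntegrable; fun_prop)
  have hftc : ∫ u in a..b, -g' u = g a - g b := by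
    rw [intervalIntegral.integral_eq_sub_of_hasDerivAt (fun u hu ↦ (hg u hu).neg) hg'int.neg]
    simp only [Pi.neg_apply]
    ring
  have hrest : |∫ u in a..b, g' u * H u| ≤ (g a - g b) / l := by
    calc |∫ u in a..b, g' u * H u| ≤ ∫ u in a..b, -g' u * (1 / l) := by
          rw [← Real.norm_eq_abs]
          refine intervalIntegral.norm_integral_le_of_norm_le (g := fun u ↦ -g' u * (1 / l)) hab
            (Filter.Eventually.of_forall fun u hu ↦ ?_) (hg'int.neg.mul_const _)
          have hu' := hg' u (Set.Ioc_subset_Icc_self hu)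
          rw [Real.norm_eq_abs, abs_mul, abs_of_nonpos hu']
          exact mul_le_mul_of_nonneg_left (hHle u) (neg_nonneg.mpr hu')
      _ = (g a - g b) / l := by rw [intervalIntegral.integral_mul_const, hftc, mul_one_div]
  have hga : 0 ≤ g a := by
    have : 0 ≤ ∫ u in a..b, -g' u :=
      intervalIntegral.integral_nonneg hab fun u hu ↦ neg_nonneg.mpr (hg' u hu)
    linarith
  have hend : ∀ c, 0 ≤ g c → |g c * H c| ≤ g c / l := fun c hc ↦ by
    rw [abs_mul, abs_of_nonneg hc, ← mul_one_div]
    exact mul_le_mul_of_nonneg_left (hHle c) hc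
  rw [hibp]
  calc _ ≤ |g b * H b| + |g a * H a| + |∫ u in a..b, g' u * H u| := by
        grw [abs_sub, abs_sub]
    _ ≤ g b / l + g a / l + (g a - g b) / l := by grw [hend b hgb, hend a hga, hrest]
    _ = 2 * g a / l := by ring

noncomputable def halfCsc (u : ℝ) : ℝ := (2 * sin (u / 2))⁻¹

lemma sin_half_pos {u : ℝ} (h0 : 0 < u) (h1 : u < 2 * π) : 0 < sin (u / 2) :=
  sin_pos_of_pos_of_lt_pi (by linarith) (by linarith)

lemma continuousOn_halfCsc : ContinuousOn halfCsc (Set.Ioo 0 (2 * π)) :=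
  ContinuousOn.inv₀ (by fun_prop) fun _ hu ↦ mul_ne_zero two_ne_zero (sin_half_pos hu.1 hu.2).ne'

lemma intervalIntegrable_halfCsc_mul_sin (l : ℝ) {a b : ℝ} (ha : a ∈ Set.Ioo 0 (2 * π))
    (hb : b ∈ Set.Ioo 0 (2 * π)) :
    IntervalIntegrable (fun u ↦ halfCsc u * sin (l * u)) MeasureTheory.volume a b :=
  ((continuousOn_halfCsc.mono (Set.ordConnected_Ioo.uIcc_subset ha hb)).mul
    (by fun_prop)).intervalIntegrable

lemma hasDerivAt_halfCsc {u : ℝ} (hu : sin (u / 2) ≠ 0) :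
    HasDerivAt halfCsc (-cos (u / 2) / (2 * sin (u / 2)) ^ 2) u := by
  refine (((hasDerivAt_id' u).div_const 2).sin.const_mul 2).inv (by simpa using hu)
    |>.congr_deriv ?_
  ring

lemma halfCsc_nonneg {u : ℝ} (h0 : 0 ≤ u) (h1 : u ≤ 2 * π) : 0 ≤ halfCsc u :=
  inv_nonneg.mpr <|
    mul_nonneg zero_le_two (sin_nonneg_of_nonneg_of_le_pi (by linarith) (by linarith))

lemma halfCsc_le {x : ℝ} (hx : 0 < x) (hxπ : x ≤ π) : halfCsc x ≤ π / (2 * x) := by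
  have hjordan := mul_le_sin (x := x / 2) (by linarith) (by linarith)
  rw [halfCsc, inv_le_comm₀ (by linarith [sin_half_pos hx (by linarith)]) (by positivity)]
  calc (π / (2 * x))⁻¹ = 2 * (2 / π * (x / 2)) := by field_simp
    _ ≤ 2 * sin (x / 2) := by gcongr

lemma abs_integral_halfCsc_mul_sin_le_div {l x : ℝ} (hl : 0 < l) (hx : 0 < x) (hxπ : x ≤ π) :
    |∫ u in x..π, halfCsc u * sin (l * u)| ≤ π / (l * x) := by
  have hderiv : ∀ u ∈ Set.Icc x π, HasDerivAt halfCsc (-cos (u / 2) / (2 * sin (u / 2)) ^ 2) u :=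
    fun u hu ↦ hasDerivAt_halfCsc (sin_half_pos (hx.trans_le hu.1) (by linarith [hu.2])).ne'
  have hcont : ContinuousOn (fun u ↦ -cos (u / 2) / (2 * sin (u / 2)) ^ 2) (Set.uIcc x π) := by
    rw [Set.uIcc_of_le hxπ]
    exact ContinuousOn.div (by fun_prop) (by fun_prop) fun u hu ↦
      pow_ne_zero 2 <|
        mul_ne_zero two_ne_zero (sin_half_pos (hx.trans_le hu.1) (by linarith [hu.2])).ne'
  have hnonpos : ∀ u ∈ Set.Icc x π, -cos (u / 2) / (2 * sin (u / 2)) ^ 2 ≤ 0 := fun u hu ↦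
    div_nonpos_of_nonpos_of_nonneg
      (neg_nonpos.mpr (cos_nonneg_of_mem_Icc ⟨by linarith [hu.1], by linarith [hu.2]⟩))
      (sq_nonneg _)
  calc _ ≤ 2 * halfCsc x / l := abs_integral_mul_sin_le_of_deriv_nonpos hxπ hl hderiv
        hcont.intervalIntegrable hnonpos (halfCsc_nonneg pi_pos.le (by linarith [pi_pos]))
    _ ≤ 2 * (π / (2 * x)) / l := by grw [halfCsc_le hx hxπ]
    _ = π / (l * x) := by field_simp

lemma abs_halfCsc_mul_sin_le {l u : ℝ} (hl : 0 < l) (hu : 0 < u) (huπ : u ≤ π) :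
    |halfCsc u * sin (l * u)| ≤ π * l / 2 := by
  have hsin : |sin (l * u)| ≤ l * u := by
    simpa [abs_of_pos (mul_pos hl hu)] using abs_sin_le_abs (x := l * u)
  rw [abs_mul, abs_of_nonneg (halfCsc_nonneg hu.le (by linarith))]
  calc halfCsc u * |sin (l * u)| ≤ π / (2 * u) * (l * u) := by
        gcongr
        exact halfCsc_le hu huπ
    _ = π * l / 2 := by field_simp

lemma abs_integral_halfCsc_mul_sin_le {l x : ℝ} (hl : π⁻¹ ≤ l) (hx : 0 < x) (hxπ : x ≤ π) :
    |∫ u in x..π, halfCsc u * sin (l * u)| ≤ 3 * π / 2 := by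
  have hl0 : 0 < l := (inv_pos.mpr pi_pos).trans_le hl
  rcases le_or_gt l⁻¹ x with hfar | hnear
  · calc _ ≤ π / (l * x) := abs_integral_halfCsc_mul_sin_le_div hl0 hx hxπ
      _ ≤ π / 1 := by
          gcongr
          rwa [inv_le_iff_one_le_mul₀ hl0, mul_comm] at hfar
      _ ≤ 3 * π / 2 := by linarith [pi_pos]
  have hlπ : l⁻¹ ≤ π := inv_le_of_inv_le₀ pi_pos hl
  have hmem : ∀ y, 0 < y → y ≤ π → y ∈ Set.Ioo 0 (2 * π) := fun y h0 h1 ↦ ⟨h0, by linarith⟩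
  have hnear_bound : |∫ u in x..l⁻¹, halfCsc u * sin (l * u)| ≤ π / 2 := by
    rw [← Real.norm_eq_abs]
    calc _ ≤ π * l / 2 * |l⁻¹ - x| := intervalIntegral.norm_integral_le_of_norm_le_const
          fun u hu ↦ by
            rw [Set.uIoc_of_le hnear.le] at hu
            rw [Real.norm_eq_abs]
            exact abs_halfCsc_mul_sin_le hl0 (hx.trans hu.1) (hu.2.trans hlπ)
      _ ≤ π * l / 2 * l⁻¹ := by
          rw [abs_of_pos (by linarith)]
          gcongr
          linarith
      _ = π / 2 := by field_simp
  have hfar_bound : |∫ u in l⁻¹..π, halfCsc u * sin (l * u)| ≤ π := by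
    simpa [hl0.ne'] using abs_integral_halfCsc_mul_sin_le_div hl0 (inv_pos.mpr hl0) hlπ
  have hmid := hmem l⁻¹ (inv_pos.mpr hl0) hlπ
  rw [← intervalIntegral.integral_add_adjacent_intervals
    (intervalIntegrable_halfCsc_mul_sin l (hmem x hx hxπ) hmid)
    (intervalIntegrable_halfCsc_mul_sin l hmid (hmem π pi_pos le_rfl))]
  calc _ ≤ _ := abs_add_le _ _
    _ ≤ π / 2 + π := add_le_add hnear_bound hfar_bound
    _ = 3 * π / 2 := by ring

lemma two_mul_sin_half_mul_half_add_sum_cos (N : ℕ) (u : ℝ) :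
    2 * sin (u / 2) * (1 / 2 + ∑ m ∈ Icc 1 N, cos (m * u)) = sin ((N + 1 / 2) * u) := by
  induction N with
  | zero =>
    rw [Icc_eq_empty (by norm_num), sum_empty]
    push_cast
    ring_nf
  | succ n ih =>
    rw [sum_Icc_succ_top (by omega), ← add_assoc, mul_add, ih, two_mul_sin_mul_cos,
      show u / 2 - ((n + 1 : ℕ) : ℝ) * u = -((n + 1 / 2) * u) by push_cast; ring, sin_neg]
    push_cast
    ring_nf

noncomputable def sawtoothRemainder (N : ℕ) (x : ℝ) : ℝ :=
  (π - x) / 2 - ∑ m ∈ Icc 1 N, sin (m * x) / m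

lemma hasDerivAt_sawtoothRemainder (N : ℕ) {x : ℝ} (hx : sin (x / 2) ≠ 0) :
    HasDerivAt (sawtoothRemainder N) (-(halfCsc x * sin ((N + 1 / 2) * x))) x := by
  have hsum : HasDerivAt (fun y ↦ ∑ m ∈ Icc 1 N, sin (m * y) / m)
      (∑ m ∈ Icc 1 N, cos (m * x)) x := by
    refine HasDerivAt.fun_sum fun m hm ↦ ?_
    have hm : (m : ℝ) ≠ 0 := by have := (mem_Icc.mp hm).1; positivity
    refine (((hasDerivAt_id' x).const_mul (m : ℝ)).sin.div_const (m : ℝ)).congr_deriv ?_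
    field_simp
  refine ((((hasDerivAt_id' x).const_sub π).div_const 2).sub hsum).congr_deriv ?_
  rw [halfCsc, ← two_mul_sin_half_mul_half_add_sum_cos N x,
    inv_mul_cancel_left₀ (mul_ne_zero two_ne_zero hx)]
  ring

lemma sawtoothRemainder_eq_integral (N : ℕ) {x : ℝ} (hx : 0 < x) (hxπ : x ≤ π) :
    sawtoothRemainder N x = ∫ u in x..π, halfCsc u * sin ((N + 1 / 2) * u) := by
  have hπ : sawtoothRemainder N π = 0 := by
    simp [sawtoothRemainder, sin_nat_mul_pi]
  rw [intervalIntegral.integral_eq_sub_of_hasDerivAt (f := fun y ↦ -sawtoothRemainder N y)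
    (fun u hu ↦ ?_) (intervalIntegrable_halfCsc_mul_sin _ ⟨hx, by linarith⟩ ⟨pi_pos, by linarith⟩),
    hπ]
  · ring
  · rw [Set.uIcc_of_le hxπ] at hu
    exact (hasDerivAt_sawtoothRemainder N
      (sin_half_pos (hx.trans_le hu.1) (by linarith [hu.2])).ne').neg.congr_deriv (neg_neg _)

lemma abs_sawtoothRemainder_le (N : ℕ) {x : ℝ} (hx : 0 < x) (hxπ : x ≤ π) :
    |sawtoothRemainder N x| ≤ π * min (3 / 2) (1 / ((N + 1 / 2) * x)) := by
  have hl : 0 < (N : ℝ) + 1 / 2 := by positivity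
  rw [sawtoothRemainder_eq_integral N hx hxπ, mul_min_of_nonneg _ _ pi_pos.le, le_min_iff]
  constructor
  · have hπinv : π⁻¹ ≤ (N : ℝ) + 1 / 2 := by
      have := (inv_le_inv₀ pi_pos two_pos).mpr two_le_pi
      have := N.cast_nonneg (α := ℝ)
      linarith
    calc _ ≤ 3 * π / 2 := abs_integral_halfCsc_mul_sin_le hπinv hx hxπ
      _ = π * (3 / 2) := by ring
  · calc _ ≤ π / ((N + 1 / 2) * x) := abs_integral_halfCsc_mul_sin_le_div hl hx hxπ
      _ = π * (1 / ((N + 1 / 2) * x)) := by ring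

lemma sawtoothRemainder_two_pi_sub (N : ℕ) (x : ℝ) :
    sawtoothRemainder N (2 * π - x) = -sawtoothRemainder N x := by
  have hsin : ∀ m : ℕ, sin (m * (2 * π - x)) = -sin (m * x) := fun m ↦ by
    rw [mul_sub, ← sin_nat_mul_two_pi_sub (m * x) m]
  simp only [sawtoothRemainder, hsin, neg_div, sum_neg_distrib]
  ring

noncomputable def sawtoothPartialSum (N : ℕ) (t : ℝ) : ℝ :=
  ∑ m ∈ Icc 1 N, sin (2 * π * m * t) / (π * m)

lemma psi_add_sawtoothPartialSum (N : ℕ) (t : ℝ) :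
    psi t + sawtoothPartialSum N t = -sawtoothRemainder N (2 * π * Int.fract t) / π := by
  have hsin : ∀ m : ℕ, sin (2 * π * m * t) = sin (m * (2 * π * Int.fract t)) := fun m ↦ by
    rw [← Int.self_sub_floor, ← sin_sub_int_mul_two_pi _ (m * ⌊t⌋)]
    push_cast
    ring_nf
  simp only [psi, sawtoothPartialSum, sawtoothRemainder, hsin, mul_comm π, ← div_div, ← sum_div]
  field_simp
  ring_nf

lemma psi_add_sawtoothPartialSum_of_nint_eq_zero (N : ℕ) {t : ℝ} (ht : nint t = 0) :
    psi t + sawtoothPartialSum N t = -1 / 2 := by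
  have hfract : Int.fract t = 0 := by
    rw [nint, abs_sub_round_eq_min, min_eq_iff] at ht
    rcases ht with ⟨h, -⟩ | ⟨h, -⟩
    · exact h
    · linarith [Int.fract_lt_one t]
  rw [psi_add_sawtoothPartialSum, hfract]
  simp only [sawtoothRemainder, mul_zero, sub_zero, sin_zero, zero_div, sum_const_zero]
  field_simp

lemma abs_psi_add_sawtoothPartialSum_le (N : ℕ) {t : ℝ} (ht : nint t ≠ 0) :
    |psi t + sawtoothPartialSum N t| ≤ min (3 / 2) (1 / ((N + 1 / 2) * (2 * π * nint t))) := by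
  have hpos : 0 < nint t := lt_of_le_of_ne (abs_nonneg _) (Ne.symm ht)
  have hreflect : |sawtoothRemainder N (2 * π * Int.fract t)| =
      |sawtoothRemainder N (2 * π * nint t)| := by
    rw [nint, abs_sub_round_eq_min]
    rcases le_total (Int.fract t) (1 - Int.fract t) with h | h
    · rw [min_eq_left h]
    · rw [min_eq_right h, ← abs_neg, ← sawtoothRemainder_two_pi_sub]
      ring_nf
  have hhalf : nint t ≤ 1 / 2 := abs_sub_round t
  rw [psi_add_sawtoothPartialSum, abs_div, abs_neg, hreflect, abs_of_pos pi_pos,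
    div_le_iff₀' pi_pos]
  exact abs_sawtoothRemainder_le N (by positivity) (by nlinarith [pi_pos])

lemma sum_Icc_neg_erase_zero {M : Type*} [AddCommMonoid M] (f : ℤ → M) (n : ℕ) :
    ∑ m ∈ (Icc (-(n : ℤ)) n).erase 0, f m = ∑ m ∈ Icc 1 n, (f m + f (-m)) := by
  induction n with
  | zero => simp
  | succ n ih =>
    have hinsert : (Icc (-((n + 1 : ℕ) : ℤ)) (n + 1 : ℕ)).erase 0 =
        insert ((n + 1 : ℕ) : ℤ) (insert (-((n + 1 : ℕ) : ℤ)) ((Icc (-(n : ℤ)) n).erase 0)) := by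
      ext m
      simp only [mem_erase, mem_Icc, mem_insert]
      omega
    rw [hinsert, sum_insert (by simp only [mem_insert, mem_erase, mem_Icc]; omega),
      sum_insert (by simp), ih, sum_Icc_succ_top (by omega)]
    abel

lemma e_div_add_e_neg_div_eq_sin (t : ℝ) {m : ℤ} (hm : m ≠ 0) :
    e (m * t) / (2 * π * Complex.I * m) + e ((-m : ℤ) * t) / (2 * π * Complex.I * (-m : ℤ)) =
      ((sin (2 * π * m * t) / (π * m) : ℝ) : ℂ) := by
  have hm' : (m : ℂ) ≠ 0 := Int.cast_ne_zero.mpr hm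
  rw [Complex.ofReal_div, Complex.ofReal_sin, Complex.sin]
  simp only [e]
  push_cast
  field_simp
  ring_nf
  rw [Complex.I_sq]
  ring

lemma sum_e_div_eq_sawtoothPartialSum (n : ℕ) (t : ℝ) :
    ∑ m ∈ (Icc (-(n : ℤ)) n).erase 0, e (m * t) / (2 * π * Complex.I * m) =
      (sawtoothPartialSum n t : ℂ) := by
  rw [sum_Icc_neg_erase_zero, sawtoothPartialSum, Complex.ofReal_sum]
  refine sum_congr rfl fun k hk ↦ ?_
  have hk : (k : ℤ) ≠ 0 := by have := (mem_Icc.mp hk).1; omega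
  simpa using e_div_add_e_neg_div_eq_sin t hk

/-- Truncated Fourier expansion of the sawtooth function: for `M ≥ 2`,
`ψ(t) = -Σ_{1≤|m|≤M} e(mt)/(2πim) + O(min(1, 1/(M‖t‖)))` with absolute constant. -/
theorem statement4 :
    ∃ C > 0, ∀ (M t : ℝ), 2 ≤ M →
      ‖(psi t : ℂ) + ∑ m ∈ (Finset.Icc (-⌊M⌋) ⌊M⌋).erase 0,
          e (m * t) / (2 * Real.pi * Complex.I * m)‖ ≤
        C * (if nint t = 0 then 1 else min 1 (1 / (M * nint t))) := by
  refine ⟨3 / 2, by norm_num, fun M t hM ↦ ?_⟩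
  rw [← Int.natCast_floor_eq_floor (by linarith), sum_e_div_eq_sawtoothPartialSum,
    ← Complex.ofReal_add, Complex.norm_real, Real.norm_eq_abs]
  split_ifs with ht
  · rw [psi_add_sawtoothPartialSum_of_nint_eq_zero _ ht]
    norm_num
  have hpos : 0 < nint t := lt_of_le_of_ne (abs_nonneg _) (Ne.symm ht)
  have hM : M ≤ (⌊M⌋₊ + 1 / 2) * (2 * π) := by
    nlinarith [Nat.lt_floor_add_one M, two_le_pi]
  calc _ ≤ min (3 / 2) (1 / ((⌊M⌋₊ + 1 / 2) * (2 * π * nint t))) :=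
        abs_psi_add_sawtoothPartialSum_le _ ht
    _ ≤ min (3 / 2) (3 / 2 * (1 / (M * nint t))) := by
        refine min_le_min le_rfl ?_
        calc _ ≤ 1 / (M * nint t) := one_div_le_one_div_of_le (by positivity) (by nlinarith)
          _ ≤ _ := le_mul_of_one_le_left (by positivity) (by norm_num)
    _ = 3 / 2 * min 1 (1 / (M * nint t)) := by rw [mul_min_of_nonneg _ _ (by norm_num)]; norm_num
end

section
/- Let α ∈ ℝ, a ∈ ℤ, q ∈ ℕ with |α − a/q| < 1/q², gcd(a,q) = 1, q ≥ 2. Fix an integer H with 1 ≤ H ≤ q^{1/2}. For each integer h with 1 ≤ h ≤ H, choose integers a_h, q_h with |αh − a_h/q_h| ≤ 1/(q_h·q²), gcd(a_h, q_h) = 1, and 1 ≤ q_h ≤ q². Then q_h > q^{1//3} for every such h. -/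
open Real

/-! If `q_h ≤ q^{1/3}` then `N = h q_h ≤ q^{5/6} < q`, so by coprimality `a_h / N ≠ a / q` and the
two fractions are at least `1 / (q N)` apart; yet both lie within `1/q²` resp. `1/(N q²)` of `α`,
and `1/q² + 1/(N q²) ≤ 1/(q N)` as soon as `N < q`. -/

lemma mul_lt_of_le_rpow_of_le_rpow {q x y s t : ℝ} (hq : 1 < q) (hy0 : 0 ≤ y)
    (hx : x ≤ q ^ s) (hy : y ≤ q ^ t) (hst : s + t < 1) : x * y < q :=
  calc x * y ≤ q ^ s * q ^ t := mul_le_mul hx hy hy0 (rpow_nonneg (by linarith) s)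
    _ = q ^ (s + t) := (rpow_add (by linarith) s t).symm
    _ < q ^ (1 : ℝ) := rpow_lt_rpow_of_exponent_lt hq hst
    _ = q := rpow_one q

lemma Int.mul_ne_mul_of_gcd_eq_one_of_lt {a b : ℤ} {q n : ℕ} (hgcd : Int.gcd a q = 1)
    (hn : 0 < n) (hnq : n < q) : a * n ≠ q * b := by
  intro he
  have hdvd : (q : ℤ) ∣ n :=
    Int.dvd_of_dvd_mul_right_of_gcd_one ⟨b, he⟩ (by rwa [Int.gcd_comm])
  exact absurd (Nat.le_of_dvd hn (Int.natCast_dvd_natCast.mp hdvd)) (by omega)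

lemma one_div_mul_le_abs_div_sub_div {a b : ℤ} {q n : ℕ} (hq : 0 < q) (hn : 0 < n)
    (hne : a * n ≠ q * b) : 1 / ((q : ℝ) * n) ≤ |(a : ℝ) / q - b / n| := by
  have hnum : (1 : ℝ) ≤ |((a * n - q * b : ℤ) : ℝ)| := by
    rw [← Int.cast_abs]
    exact_mod_cast Int.one_le_abs (sub_ne_zero.mpr hne)
  have hsplit : (a : ℝ) / q - b / n = ((a * n - q * b : ℤ) : ℝ) / ((q : ℝ) * n) := by
    push_cast
    field_simp
  have hden : (0 : ℝ) < q * n := by positivity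
  rw [hsplit, abs_div, abs_of_pos hden]
  exact div_le_div_of_nonneg_right hnum hden.le

lemma abs_sub_div_mul_le_of_abs_mul_sub_le {α c ε h n : ℝ} (hh : 0 < h)
    (happrox : |α * h - c / n| ≤ ε) : |α - c / (h * n)| ≤ ε / h := by
  have hsplit : α - c / (h * n) = (α * h - c / n) / h := by
    rw [sub_div, mul_div_cancel_right₀ α hh.ne', div_div, mul_comm n]
  rw [hsplit, abs_div, abs_of_pos hh]
  exact div_le_div_of_nonneg_right happrox hh.le

lemma one_div_sq_add_one_div_mul_sq_le {q N : ℝ} (hN : 0 < N) (hNq : N + 1 ≤ q) :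
    1 / q ^ 2 + 1 / (N * q ^ 2) ≤ 1 / (q * N) := by
  have hq : 0 < q := by linarith
  calc 1 / q ^ 2 + 1 / (N * q ^ 2) = (N + 1) / (N * q ^ 2) := by field_simp
    _ ≤ q / (N * q ^ 2) := by gcongr
    _ = 1 / (q * N) := by field_simp

theorem statement6_general (α : ℝ) (a : ℤ) (q : ℕ) (hq : 2 ≤ q)
    (hαa : |α - (a : ℝ) / q| < 1 / (q : ℝ) ^ 2) (hgcd : Int.gcd a q = 1)
    (H : ℕ) (hH2 : (H : ℝ) ≤ (q : ℝ) ^ ((1:ℝ)/2))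
    (h : ℕ) (hh : 1 ≤ h ∧ h ≤ H) (ah : ℤ) (qh : ℕ) (hqh1 : 1 ≤ qh)
    (happrox : |α * h - (ah : ℝ) / qh| ≤ 1 / (qh * (q : ℝ) ^ 2)) :
    (q : ℝ) ^ ((1:ℝ)/3) < qh := by
  by_contra! hqh
  have hhH : (h : ℝ) ≤ q ^ ((1:ℝ)/2) := le_trans (by exact_mod_cast hh.2) hH2
  have hN : h * qh < q := by
    exact_mod_cast mul_lt_of_le_rpow_of_le_rpow (by exact_mod_cast hq) (Nat.cast_nonneg _)
      hhH hqh (by norm_num)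
  have hN0 : 0 < h * qh := Nat.mul_pos hh.1 hqh1
  have hlower := one_div_mul_le_abs_div_sub_div (b := ah) (by omega) hN0
    (Int.mul_ne_mul_of_gcd_eq_one_of_lt hgcd hN0 hN)
  have hupper := abs_sub_div_mul_le_of_abs_mul_sub_le (by exact_mod_cast hh.1) happrox
  have hsum := one_div_sq_add_one_div_mul_sq_le (q := q) (N := (h : ℝ) * qh)
    (by exact_mod_cast hN0) (by exact_mod_cast hN)
  have htri := abs_sub_le ((a : ℝ) / q) α (ah / ((h : ℝ) * qh))
  rw [abs_sub_comm] at hαa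
  push_cast at hlower
  rw [div_div, mul_comm ((qh : ℝ) * _), ← mul_assoc] at hupper
  linarith

/-- Rational approximation lower bound: with `|α - a/q| < 1/q²`, `gcd(a,q)=1`,
`q ≥ 2`, `1 ≤ H ≤ q^{1/2}`, if for `1 ≤ h ≤ H` the integers `a_h, q_h` satisfy
`|αh - a_h/q_h| ≤ 1/(q_h q²)`, `gcd(a_h,q_h)=1`, `1 ≤ q_h ≤ q²`, then
`q_h > q^{1/3}`. -/
theorem statement6 (α : ℝ) (a : ℤ) (q : ℕ) (hq : 2 ≤ q)
    (hαa : |α - (a : ℝ) / q| < 1 / (q : ℝ) ^ 2) (hgcd : Int.gcd a q = 1)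
    (H : ℕ) (hH1 : 1 ≤ H) (hH2 : (H : ℝ) ≤ (q : ℝ) ^ ((1:ℝ)/2))
    (h : ℕ) (hh : 1 ≤ h ∧ h ≤ H) (ah : ℤ) (qh : ℕ) (hqh1 : 1 ≤ qh)
    (hqh2 : qh ≤ q ^ 2) (hgcdh : Int.gcd ah qh = 1)
    (happrox : |α * h - (ah : ℝ) / qh| ≤ 1 / (qh * (q : ℝ) ^ 2)) :
    (q : ℝ) ^ ((1:ℝ)/3) < qh :=
  statement6_general α a q hq hαa hgcd H hH2 h hh ah qh hqh1 happrox
end
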